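/- arXiv:1708.03032 — 3 statements merged into one kernel-verified Lean document; each statement's English description precedes it below -/
import Mathlib

section
/- Let UJ_n carry an elementary G-grading and set t_i = deg e_{i,i+1} for i = 1,…,n−1. Then t_i t_j = t_j t_i for all i, j ∈ {1,…,n−1}; consequently the support of the grading is commutative (all its elements pairwise commute). -/
open Matrix

/-- The submodule of upper triangular `n × n` matrices over `K`. -/
def UTs (K : Type*) [Field K] (n : ℕ) : Submodule K (Matrix (Fin n) (Fin n) K) where
  carrier := {M | ∀ i j : Fin n, (j : ℕ) < (i : ℕ) → M i j = 0}
  add_mem' := by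
    intro a b ha hb i j h
    simp [ha i j h, hb i j h]
  zero_mem' := by
    intro i j h
    simp
  smul_mem' := by
    intro c a ha i j h
    simp [ha i j h]

/-- `UJ K n` : the underlying space of the Jordan algebra of upper triangular matrices. -/
abbrev UJ (K : Type*) [Field K] (n : ℕ) : Type _ := ↥(UTs K n)

theorem mem_UTs {K : Type*} [Field K] {n : ℕ} {a : Matrix (Fin n) (Fin n) K} :
    a ∈ UTs K n ↔ ∀ i j : Fin n, (j : ℕ) < (i : ℕ) → a i j = 0 := Iff.rfl

theorem UTs_mul_mem {K : Type*} [Field K] {n : ℕ} {a b : Matrix (Fin n) (Fin n) K}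
    (ha : a ∈ UTs K n) (hb : b ∈ UTs K n) : a * b ∈ UTs K n := by
  rw [mem_UTs] at ha hb ⊢
  intro i j h
  rw [Matrix.mul_apply]
  apply Finset.sum_eq_zero
  intro k _
  rcases lt_or_ge (k : ℕ) (i : ℕ) with hk | hk
  · rw [ha i k hk, zero_mul]
  · rw [hb k j (lt_of_lt_of_le h hk), mul_zero]

/-- The Jordan product `x ∘ y = xy + yx` on upper triangular matrices. -/
def jmul {K : Type*} [Field K] {n : ℕ} (x y : UJ K n) : UJ K n :=
  ⟨x.1 * y.1 + y.1 * x.1, (UTs K n).add_mem (UTs_mul_mem x.2 y.2) (UTs_mul_mem y.2 x.2)⟩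

/-- The matrix unit `e_{ij}` (with `i ≤ j`) as an element of `UJ K n`. -/
def Eu (K : Type*) [Field K] {n : ℕ} (i j : Fin n) (h : i ≤ j) : UJ K n :=
  ⟨Matrix.single i j 1, by
    rw [mem_UTs]
    intro a b hab
    by_cases h1 : i = a ∧ j = b
    · exfalso
      rcases h1 with ⟨rfl, rfl⟩
      exact absurd hab (not_lt.mpr h)
    · simp only [Matrix.single, Matrix.of_apply, if_neg h1]⟩

/-- `Y⁺_{i:m} = e_{i:m} + e_{−i:m}` (`0`-based index `i`, `i + m < n`). -/
def Yp (K : Type*) [Field K] {n : ℕ} (i m : ℕ) (h : i + m < n) : UJ K n :=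
  Eu K ⟨i, by omega⟩ ⟨i + m, h⟩ (Fin.mk_le_mk.mpr (by omega)) +
  Eu K ⟨n - 1 - i - m, by omega⟩ ⟨n - 1 - i, by omega⟩ (Fin.mk_le_mk.mpr (by omega))

/-- `Y⁻_{i:m} = e_{i:m} − e_{−i:m}` (`0`-based index `i`, `i + m < n`). -/
def Ym (K : Type*) [Field K] {n : ℕ} (i m : ℕ) (h : i + m < n) : UJ K n :=
  Eu K ⟨i, by omega⟩ ⟨i + m, h⟩ (Fin.mk_le_mk.mpr (by omega)) -
  Eu K ⟨n - 1 - i - m, by omega⟩ ⟨n - 1 - i, by omega⟩ (Fin.mk_le_mk.mpr (by omega))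

/-- A `G`-grading on the Jordan algebra `UJ K n`: a direct sum decomposition into
`K`-subspaces `comp g` with `comp g ∘ comp h ⊆ comp (g * h)`. -/
structure UJGrading (K : Type*) [Field K] (n : ℕ) (G : Type*) [Group G] where
  comp : G → Submodule K (UJ K n)
  indep : iSupIndep comp
  sup_top : (⨆ g, comp g) = ⊤
  jmul_mem : ∀ (g h : G) (x y : UJ K n), x ∈ comp g → y ∈ comp h → jmul x y ∈ comp (g * h)

/-- A graded isomorphism between two families of components: a bijective linear map
preserving the Jordan product and mapping each component onto the corresponding one. -/
def GradedIso {K : Type*} [Field K] {n : ℕ} {G : Type*} [Group G]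
    (A A' : G → Submodule K (UJ K n)) : Prop :=
  ∃ ψ : UJ K n ≃ₗ[K] UJ K n,
    (∀ x y, ψ (jmul x y) = jmul (ψ x) (ψ y)) ∧
    ∀ g, (A g).map (ψ : UJ K n →ₗ[K] UJ K n) = A' g

/-- A family of components is elementary if every matrix unit is homogeneous. -/
def IsElementaryFam {K : Type*} [Field K] {n : ℕ} {G : Type*} [Group G]
    (A : G → Submodule K (UJ K n)) : Prop :=
  ∀ (i j : Fin n) (h : i ≤ j), ∃ g, Eu K i j h ∈ A g

/-- A family of components is of mirror type (MT) if every nonzero `Y⁺_{i:m}`, `Y⁻_{i:m}`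
is homogeneous, and their degrees differ whenever both are nonzero. -/
def IsMTFam {K : Type*} [Field K] {n : ℕ} {G : Type*} [Group G]
    (A : G → Submodule K (UJ K n)) : Prop :=
  ∀ (i m : ℕ) (h : i + m < n),
    (Yp K i m h ≠ 0 → ∃ g, Yp K i m h ∈ A g) ∧
    (Ym K i m h ≠ 0 → ∃ g, Ym K i m h ∈ A g) ∧
    (Yp K i m h ≠ 0 → Ym K i m h ≠ 0 →
      ∀ g g' : G, Yp K i m h ∈ A g → Ym K i m h ∈ A g' → g ≠ g')

/-- The degree of the matrix unit `e_{ij}` in the elementary grading defined by `η`: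
`g_i g_{i+1} ⋯ g_{j-1}`. -/
def elemDeg {n : ℕ} (G : Type*) [CommGroup G] (η : Fin (n - 1) → G) (i j : Fin n) : G :=
  ∏ k ∈ (Finset.Ico (i : ℕ) (j : ℕ)).attach,
    η ⟨k.1, by have hk := Finset.mem_Ico.mp k.2; have hj := j.isLt; omega⟩

/-- The components of the elementary grading `(UJ_n, η)`. -/
def elemComp (K : Type*) [Field K] {n : ℕ} {G : Type*} [CommGroup G]
    (η : Fin (n - 1) → G) (g : G) : Submodule K (UJ K n) :=
  Submodule.span K {x : UJ K n | ∃ (i j : Fin n) (h : i ≤ j), elemDeg G η i j = g ∧ x = Eu K i j h}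

/-- The degree of `Y⁺_{i:m}` in the MT grading determined by `η ∈ G^{⌈(n-1)/2⌉}`. -/
def mtDeg {n : ℕ} (G : Type*) [CommGroup G] (η : Fin (n / 2) → G)
    (i m : ℕ) (h : i + m < n) : G :=
  ∏ k ∈ (Finset.range m).attach,
    η ⟨min (i + k.1) (n - 2 - (i + k.1)), by have hk := Finset.mem_range.mp k.2; omega⟩

/-- The components of the MT grading `(UJ_n, t, η)`:
`deg Y⁺_{i:m}` is `mtDeg η i m` and `deg Y⁻_{i:m} = t ⬝ mtDeg η i m`. -/
def mtComp (K : Type*) [Field K] {n : ℕ} {G : Type*} [CommGroup G]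
    (t : G) (η : Fin (n / 2) → G) (g : G) : Submodule K (UJ K n) :=
  Submodule.span K {x : UJ K n |
    (∃ (i m : ℕ) (h : i + m < n), mtDeg G η i m h = g ∧ x = Yp K i m h) ∨
    (∃ (i m : ℕ) (h : i + m < n), t * mtDeg G η i m h = g ∧ x = Ym K i m h)}

/-- The set `𝒯_m` of permutations that strictly decrease to the value `0` and then
strictly increase. -/
def TT (m : ℕ) : Set (Equiv.Perm (Fin m)) :=
  {σ | ∃ t : Fin m, (σ t : ℕ) = 0 ∧
    (∀ a b : Fin m, a < b → b ≤ t → σ b < σ a) ∧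
    (∀ a b : Fin m, t ≤ a → a < b → σ a < σ b)}

/-- The left-normed Jordan product of a list of elements (`0` for the empty list). -/
def jprod {K : Type*} [Field K] {n : ℕ} : List (UJ K n) → UJ K n
  | [] => 0
  | x :: xs => xs.foldl jmul x

/-- The `k`-th left-normed Jordan power `x ∘ x ∘ ⋯ ∘ x` (`k` factors, `0` for `k = 0`). -/
def jpow {K : Type*} [Field K] {n : ℕ} (x : UJ K n) : ℕ → UJ K n
  | 0 => 0
  | 1 => x
  | (k + 2) => jmul (jpow x (k + 1)) x

/-! A nonzero homogeneous element has a unique degree. For `i ≠ k` the matrix unit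
`e_ik = e_ij ∘ e_jk = e_jk ∘ e_ij` therefore has degree both `gh` and `hg`, where `g = deg e_ij`
and `h = deg e_jk`. Applied to `e_{i,i+1}`, `e_{i+1,j}` and `e_{i+1,j+1} = e_{i+1,j} ∘ e_{j,j+1}`,
this shows that `t_i` commutes with `deg e_{i+1,j}` and with `deg e_{i+1,j} * t_j`, hence with `t_j`.
Since `e_ii ∘ e_ij = e_ij` for `i < j` and `e_ji ∘ e_ii = e_ji` for `j < i`, diagonal units have
degree `1`, so by induction every `deg e_ij` lies in the abelian subgroup generated by the `t_i`.
Finally, the matrix units span `UJ_n` and are homogeneous, so every nonzero component contains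
one of them. -/

section MatrixUnits

variable {K : Type*} [Field K] {n : ℕ}

lemma Eu_ne_zero (i j : Fin n) (h : i ≤ j) : Eu K i j h ≠ 0 := by
  intro hEq
  simpa [Eu] using congrArg (fun x : UJ K n => x.1 i j) hEq

lemma jmul_comm (x y : UJ K n) : jmul x y = jmul y x := Subtype.ext (add_comm _ _)

lemma jmul_Eu_Eu {i j k : Fin n} (hij : i ≤ j) (hjk : j ≤ k) (hik : i ≠ k) :
    jmul (Eu K i j hij) (Eu K j k hjk) = Eu K i k (hij.trans hjk) := by
  apply Subtype.ext
  simp [jmul, Eu, Matrix.single_mul_single_of_ne _ _ _ _ hik.symm]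

lemma span_Eu_eq_top :
    Submodule.span K {x : UJ K n | ∃ (i j : Fin n) (h : i ≤ j), x = Eu K i j h} = ⊤ := by
  refine eq_top_iff.2 fun x _ => ?_
  have hx : x = ∑ i, ∑ j, if h : i ≤ j then x.1 i j • Eu K i j h else 0 := by
    ext a b
    simp only [Submodule.coe_sum, Matrix.sum_apply, apply_dite Subtype.val,
      apply_dite (fun M : Matrix (Fin n) (Fin n) K => M a b), Submodule.coe_smul, Eu,
      ZeroMemClass.coe_zero, Matrix.zero_apply, Matrix.smul_apply, Matrix.single_apply]
    have hentry : ∀ i j : Fin n, (if h : i ≤ j then x.1 i j • (if i = a ∧ j = b then 1 else 0)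
        else 0) = if i = a ∧ j = b then x.1 a b else 0 := by
      intro i j
      split_ifs with hij hab hab
      · obtain ⟨rfl, rfl⟩ := hab
        simp
      · simp
      · obtain ⟨rfl, rfl⟩ := hab
        exact (x.2 _ _ (lt_of_not_ge hij)).symm
      · rfl
    simp only [hentry]
    simp [ite_and]
  rw [hx]
  refine Submodule.sum_mem _ fun i _ => Submodule.sum_mem _ fun j _ => ?_
  split_ifs with h
  · exact Submodule.smul_mem _ _ (Submodule.subset_span ⟨i, j, h, rfl⟩)
  · exact Submodule.zero_mem _

end MatrixUnits

lemma iSupIndep.exists_mem_of_ne_bot {R M ι : Type*} [Ring R] [AddCommGroup M] [Module R M]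
    {A : ι → Submodule R M} (hA : iSupIndep A) {S : Set M} (hS : Submodule.span R S = ⊤)
    (hhom : ∀ s ∈ S, ∃ i, s ∈ A i) {i : ι} (hi : A i ≠ ⊥) : ∃ s ∈ S, s ∈ A i := by
  by_contra! hno
  have hS_le : S ⊆ ↑(⨆ (j) (_ : j ≠ i), A j) := fun s hs => by
    obtain ⟨j, hj⟩ := hhom s hs
    have hji : j ≠ i := by rintro rfl; exact hno s hs hj
    exact le_iSup₂ (f := fun j (_ : j ≠ i) => A j) j hji hj
  have hle := Submodule.span_le.2 hS_le
  rw [hS, top_le_iff] at hle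
  exact hi (disjoint_top.1 (hle ▸ hA i))

namespace UJGrading

variable {K : Type*} [Field K] {n : ℕ} {G : Type*} [Group G] (A : UJGrading K n G)

lemma eq_of_mem_of_mem {x : UJ K n} (hx : x ≠ 0) {g h : G} (hg : x ∈ A.comp g)
    (hh : x ∈ A.comp h) : g = h := by
  by_contra hne
  exact hx (Submodule.disjoint_def.1 (A.indep.pairwiseDisjoint hne) x hg hh)

lemma Eu_mem_mul {i j k : Fin n} (hij : i ≤ j) (hjk : j ≤ k) (hik : i ≠ k) {g h : G}
    (hg : Eu K i j hij ∈ A.comp g) (hh : Eu K j k hjk ∈ A.comp h) :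
    Eu K i k (hij.trans hjk) ∈ A.comp (g * h) := by
  simpa [jmul_Eu_Eu hij hjk hik] using A.jmul_mem _ _ _ _ hg hh

lemma commute_of_Eu_mem {i j k : Fin n} (hij : i ≤ j) (hjk : j ≤ k) (hik : i ≠ k) {g h : G}
    (hg : Eu K i j hij ∈ A.comp g) (hh : Eu K j k hjk ∈ A.comp h) : Commute g h := by
  refine A.eq_of_mem_of_mem (Eu_ne_zero _ _ _) (A.Eu_mem_mul hij hjk hik hg hh) ?_
  simpa [jmul_comm, jmul_Eu_Eu hij hjk hik] using A.jmul_mem _ _ _ _ hh hg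

lemma eq_one_of_Eu_self_mem (hA : IsElementaryFam A.comp) {i j : Fin n} (hij : i ≠ j) {g : G}
    (hg : Eu K i i le_rfl ∈ A.comp g) : g = 1 := by
  rcases hij.lt_or_gt with hlt | hgt
  · obtain ⟨h, hh⟩ := hA i j hlt.le
    exact mul_eq_right.1 <|
      A.eq_of_mem_of_mem (Eu_ne_zero _ _ _) (A.Eu_mem_mul le_rfl hlt.le hij hg hh) hh
  · obtain ⟨h, hh⟩ := hA j i hgt.le
    exact mul_eq_left.1 <|
      A.eq_of_mem_of_mem (Eu_ne_zero _ _ _) (A.Eu_mem_mul hgt.le le_rfl hij.symm hh hg) hh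

def IsSuperdiagDeg (t : Fin (n - 1) → G) : Prop :=
  ∀ i : Fin (n - 1), Eu K ⟨i, i.isLt.trans_le (n.sub_le 1)⟩ ⟨i + 1, Nat.add_lt_of_lt_sub i.isLt⟩
    (Fin.mk_le_mk.mpr i.1.le_succ) ∈ A.comp (t i)

lemma exists_Eu_mem_of_ne_bot (hA : IsElementaryFam A.comp) {g : G} (hg : A.comp g ≠ ⊥) :
    ∃ (i j : Fin n) (h : i ≤ j), Eu K i j h ∈ A.comp g := by
  obtain ⟨_, ⟨i, j, hij, rfl⟩, hgu⟩ := A.indep.exists_mem_of_ne_bot span_Eu_eq_top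
    (by rintro _ ⟨i, j, hij, rfl⟩; exact hA i j hij) hg
  exact ⟨i, j, hij, hgu⟩

variable {A} {t : Fin (n - 1) → G}

lemma IsSuperdiagDeg.commute_of_lt (ht : A.IsSuperdiagDeg t) (hA : IsElementaryFam A.comp)
    {i j : Fin (n - 1)} (hij : i < j) : Commute (t i) (t j) := by
  have hij : i.1 < j.1 := hij
  have hj := j.isLt
  obtain ⟨e, he⟩ := hA ⟨i.1 + 1, by omega⟩ ⟨j.1, by omega⟩ (Fin.mk_le_mk.mpr (by omega))
  have hte : Commute (t i) e :=
    A.commute_of_Eu_mem _ _ (Fin.ne_of_val_ne (by dsimp only; omega)) (ht i) he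
  have hej := A.Eu_mem_mul _ _ (Fin.ne_of_val_ne (by dsimp only; omega)) he (ht j)
  have htej : Commute (t i) (e * t j) :=
    A.commute_of_Eu_mem _ _ (Fin.ne_of_val_ne (by dsimp only; omega)) (ht i) hej
  simpa using hte.inv_right.mul_right htej

lemma IsSuperdiagDeg.commute (ht : A.IsSuperdiagDeg t) (hA : IsElementaryFam A.comp)
    (i j : Fin (n - 1)) : Commute (t i) (t j) := by
  rcases lt_trichotomy i j with hij | rfl | hij
  · exact ht.commute_of_lt hA hij
  · exact Commute.refl _
  · exact (ht.commute_of_lt hA hij).symm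

lemma IsSuperdiagDeg.mem_closure_of_Eu_mem (ht : A.IsSuperdiagDeg t) (hn : 2 ≤ n)
    (hA : IsElementaryFam A.comp) {i j : Fin n} (hij : i ≤ j) {g : G}
    (hg : Eu K i j hij ∈ A.comp g) : g ∈ Subgroup.closure (Set.range t) := by
  have : Nontrivial (Fin n) := Fin.nontrivial_iff_two_le.2 hn
  have deg_diag {k : Fin n} {g : G} (hg : Eu K k k le_rfl ∈ A.comp g) : g = 1 :=
    have ⟨_, hk⟩ := exists_ne k
    A.eq_one_of_Eu_self_mem hA hk.symm hg
  obtain ⟨i, hi⟩ := i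
  obtain ⟨j, hj⟩ := j
  induction j generalizing g with
  | zero =>
    obtain rfl : i = 0 := by simpa using hij
    rw [deg_diag hg]
    exact one_mem _
  | succ j ih =>
    rcases (Fin.mk_le_mk.1 hij).eq_or_lt with rfl | hlt
    · rw [deg_diag hg]
      exact one_mem _
    · have hjn : j < n - 1 := by omega
      obtain ⟨d, hd⟩ := hA ⟨i, hi⟩ ⟨j, by omega⟩ (Fin.mk_le_mk.2 (by omega))
      have hgd := A.eq_of_mem_of_mem (Eu_ne_zero _ _ _) hg
        (A.Eu_mem_mul _ _ (Fin.ne_of_val_ne (by dsimp only; omega)) hd (ht ⟨j, hjn⟩))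
      rw [hgd]
      exact mul_mem (ih _ _ hd) (Subgroup.subset_closure ⟨_, rfl⟩)

end UJGrading

/-- In an elementary grading the degrees `t_i = deg e_{i,i+1}` pairwise commute, and the
support of the grading is commutative. -/
theorem statement_6 {K : Type*} [Field K]
    {n : ℕ} (hn : 2 ≤ n) {G : Type*} [Group G]
    (A : UJGrading K n G) (hA : IsElementaryFam A.comp)
    (t : Fin (n - 1) → G)
    (ht : ∀ i : Fin (n - 1),
      Eu K ⟨i.1, by have := i.isLt; omega⟩ ⟨i.1 + 1, by have := i.isLt; omega⟩
        (Fin.mk_le_mk.mpr (by omega)) ∈ A.comp (t i)) :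
    (∀ i j : Fin (n - 1), t i * t j = t j * t i) ∧
    (∀ g h : G, A.comp g ≠ ⊥ → A.comp h ≠ ⊥ → g * h = h * g) := by
  replace ht : A.IsSuperdiagDeg t := ht
  have htt (i j : Fin (n - 1)) : t i * t j = t j * t i := (ht.commute hA i j).eq
  refine ⟨htt, fun g h hg hh => ?_⟩
  have := Subgroup.isMulCommutative_closure (k := Set.range t) <| by
    rintro _ ⟨i, rfl⟩ _ ⟨j, rfl⟩
    exact htt i j
  obtain ⟨i, j, hij, hgu⟩ := A.exists_Eu_mem_of_ne_bot hA hg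
  obtain ⟨k, l, hkl, hhu⟩ := A.exists_Eu_mem_of_ne_bot hA hh
  exact setLike_mul_comm (ht.mem_closure_of_Eu_mem hn hA hij hgu)
    (ht.mem_closure_of_Eu_mem hn hA hkl hhu)
end

section
/- Let r_1, …, r_m be strictly upper triangular matrix units in UJ_n (i.e. each r_k = e_{i_k j_k} with i_k < j_k) such that the associative matrix product r_1 r_2 ⋯ r_m ≠ 0, and let σ be a permutation of {1,…,m}. Then the left-normed Jordan product r_{σ⁻¹(1)} ∘ r_{σ⁻¹(2)} ∘ ⋯ ∘ r_{σ⁻¹(m)} is nonzero if and only if σ ∈ 𝒯_m. -/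
open Matrix

/-!
Index the factors from `0`. The nonvanishing of `r_0 ⋯ r_{m-1}` forces `r_k = e_{a_k a_{k+1}}` for
a chain `a_0 < a_1 < ⋯ < a_m`, and then `e_{a_u a_{v+1}} e_{a_{u'} a_{v'+1}}` is `e_{a_u a_{v'+1}}`
if `u' = v + 1` and zero otherwise. Hence every left-normed partial Jordan product is either zero
or the single unit `e_{a_u a_{v+1}}` spanning the positions used so far, which must form a segment
`[u, v]`; the next factor `r_w` survives exactly when `w` is adjacent to that segment, and then only
one of the two terms of the Jordan product is nonzero. So the whole product is nonzero iff every
sublevel set `σ⁻¹ {0, …, l}` is an interval, and these are exactly the permutations that decrease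
down to the value `0` and increase afterwards.
-/

open Function Set

section SingleChain

variable {R ι : Type*} [Semiring R] [Fintype ι]

theorem List.isChain_of_prod_map_single_ne_zero [DecidableEq ι] :
    ∀ {l : List (ι × ι)}, (l.map fun p => Matrix.single p.1 p.2 (1 : R)).prod ≠ 0 →
      l.IsChain fun p q => p.2 = q.1
  | [], _ => .nil
  | [_], _ => .singleton _
  | p :: q :: l, h => by
    have hq : ((q :: l).map fun p => Matrix.single p.1 p.2 (1 : R)).prod ≠ 0 := fun h' =>
      h (by rw [List.map_cons, List.prod_cons, h', mul_zero])
    refine List.isChain_cons_cons.mpr ⟨?_, List.isChain_of_prod_map_single_ne_zero hq⟩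
    by_contra hpq
    apply h
    rw [List.map_cons, List.map_cons, List.prod_cons, List.prod_cons, ← mul_assoc,
      Matrix.single_mul_single_of_ne (h := hpq), zero_mul]

theorem exists_strictMono_of_prod_single_ne_zero [LinearOrder ι] {m : ℕ}
    (f g : Fin (m + 1) → ι) (hfg : ∀ k, f k < g k)
    (h : (List.ofFn fun k => Matrix.single (f k) (g k) (1 : R)).prod ≠ 0) :
    ∃ a : Fin (m + 2) → ι, StrictMono a ∧ ∀ k, f k = a k.castSucc ∧ g k = a k.succ := by
  have hchain := List.isChain_iff_getElem.mp (List.isChain_of_prod_map_single_ne_zero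
    (l := List.ofFn fun k => (f k, g k)) (by simpa [List.map_ofFn, Function.comp_def] using h))
  simp only [List.length_ofFn, List.getElem_ofFn] at hchain
  have hfa : ∀ k : Fin (m + 1), f k = Fin.cons (α := fun _ => ι) (f 0) g k.castSucc := by
    refine Fin.cases rfl fun k => ?_
    rw [← Fin.succ_castSucc, Fin.cons_succ]
    exact (hchain k (by omega)).symm
  refine ⟨Fin.cons (f 0) g, Fin.strictMono_iff_lt_succ.mpr fun k => ?_, fun k => ⟨hfa k, rfl⟩⟩
  rw [← hfa k]
  exact hfg k

end SingleChain

section ChainUnit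

variable {R ι : Type*} [Semiring R] [DecidableEq ι] {m : ℕ}

variable (R) in
def chainUnit (a : Fin (m + 1) → ι) (u v : Fin m) : Matrix ι ι R :=
  Matrix.single (a u.castSucc) (a v.succ) 1

theorem chainUnit_mul [Fintype ι] {a : Fin (m + 1) → ι} (ha : Injective a) (u v u' v' : Fin m) :
    chainUnit R a u v * chainUnit R a u' v' =
      if (v : ℕ) + 1 = u' then chainUnit R a u v' else 0 := by
  unfold chainUnit
  split_ifs with h
  · rw [show v.succ = u'.castSucc from Fin.ext h, Matrix.single_mul_single_same, mul_one]
  · refine Matrix.single_mul_single_of_ne (h := ha.ne fun h' => h ?_) ..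
    simpa using congrArg Fin.val h'

theorem chainUnit_ne_zero [Nontrivial R] (a : Fin (m + 1) → ι) (u v : Fin m) :
    chainUnit R a u v ≠ 0 := fun h => by
  simpa [chainUnit] using congrFun₂ h (a u.castSucc) (a v.succ)

end ChainUnit

def sublevel {m : ℕ} (σ : Equiv.Perm (Fin m)) (l : ℕ) : Set (Fin m) := {i | (σ i : ℕ) ≤ l}

section Sublevel

variable {m : ℕ} (σ : Equiv.Perm (Fin m))

theorem mem_sublevel {l : ℕ} {i : Fin m} : i ∈ sublevel σ l ↔ (σ i : ℕ) ≤ l := Iff.rfl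

theorem sublevel_zero (h : 0 < m) : sublevel σ 0 = {σ⁻¹ ⟨0, h⟩} := by
  ext i
  rw [mem_sublevel, mem_singleton_iff, Equiv.Perm.eq_inv_iff_eq, Fin.ext_iff]
  exact Nat.le_zero

theorem sublevel_succ (l : ℕ) (h : l + 1 < m) :
    sublevel σ (l + 1) = insert (σ⁻¹ ⟨l + 1, h⟩) (sublevel σ l) := by
  ext i
  simp only [mem_insert_iff, mem_sublevel, Equiv.Perm.eq_inv_iff_eq, Fin.ext_iff]
  omega

theorem sublevel_eq_univ {l : ℕ} (h : m ≤ l + 1) : sublevel σ l = univ :=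
  eq_univ_of_forall fun i => by rw [mem_sublevel]; omega

theorem mem_TT_iff_ordConnected (hm : 0 < m) :
    σ ∈ TT m ↔ ∀ l, (sublevel σ l).OrdConnected := by
  constructor
  · rintro ⟨t, -, hdec, hinc⟩ l
    refine ⟨fun x hx y hy z ⟨hxz, hzy⟩ => ?_⟩
    rw [mem_sublevel] at hx hy ⊢
    rcases le_total z t with hzt | htz
    · rcases hxz.eq_or_lt with rfl | hxz
      · exact hx
      · exact (Fin.lt_def.mp (hdec x z hxz hzt)).le.trans hx
    · rcases hzy.eq_or_lt with rfl | hzy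
      · exact hy
      · exact (Fin.lt_def.mp (hinc z y htz hzy)).le.trans hy
  · intro hc
    obtain ⟨t, ht⟩ : ∃ t, (σ t : ℕ) = 0 := ⟨σ⁻¹ ⟨0, hm⟩, by simp⟩
    have between : ∀ x y z, x ≤ z → z ≤ y → (σ z : ℕ) ≤ max (σ x) (σ y) :=
      fun x y z hxz hzy => (hc (max (σ x : ℕ) (σ y))).out
        ((mem_sublevel σ).mpr (le_max_left _ _)) ((mem_sublevel σ).mpr (le_max_right _ _))
        ⟨hxz, hzy⟩
    refine ⟨t, ht, fun x y hxy hyt => ?_, fun x y htx hxy => ?_⟩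
    · refine lt_of_le_of_ne (Fin.le_def.mpr ?_) (σ.injective.ne hxy.ne')
      simpa [ht] using between x t y hxy.le hyt
    · refine lt_of_le_of_ne (Fin.le_def.mpr ?_) (σ.injective.ne hxy.ne)
      simpa [ht] using between t y x htx hxy.le

end Sublevel

section FinInterval

variable {m : ℕ} {u v w : Fin m}

theorem insert_Icc_of_succ_eq_left (hwu : (w : ℕ) + 1 = u) (huv : u ≤ v) :
    insert w (Icc u v) = Icc w v := by
  ext i
  simp only [mem_insert_iff, mem_Icc, Fin.le_def, Fin.ext_iff] at huv ⊢
  omega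

theorem insert_Icc_of_succ_eq_right (hvw : (v : ℕ) + 1 = w) (huv : u ≤ v) :
    insert w (Icc u v) = Icc u w := by
  ext i
  simp only [mem_insert_iff, mem_Icc, Fin.le_def, Fin.ext_iff] at huv ⊢
  omega

theorem not_ordConnected_insert_Icc (huv : u ≤ v) (hw : w ∉ Icc u v)
    (hwu : (w : ℕ) + 1 ≠ u) (hvw : (v : ℕ) + 1 ≠ w) : ¬ (insert w (Icc u v)).OrdConnected := by
  intro hc
  have hu : u ∈ insert w (Icc u v) := mem_insert_of_mem w (left_mem_Icc.mpr huv)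
  have hv : v ∈ insert w (Icc u v) := mem_insert_of_mem w (right_mem_Icc.mpr huv)
  simp only [mem_Icc, Fin.le_def, not_and_or, not_le] at huv hw
  rcases hw with hw | hw
  · have := hc.out (mem_insert w (Icc u v)) hu (a := ⟨w + 1, by omega⟩)
      ⟨Fin.le_def.mpr (by simp), Fin.le_def.mpr (by simp; omega)⟩
    simp only [mem_insert_iff, mem_Icc, Fin.le_def, Fin.ext_iff] at this
    omega
  · have := hc.out hv (mem_insert w (Icc u v)) (a := ⟨v + 1, by omega⟩)
      ⟨Fin.le_def.mpr (by simp), Fin.le_def.mpr (by simp; omega)⟩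
    simp only [mem_insert_iff, mem_Icc, Fin.le_def, Fin.ext_iff] at this
    omega

end FinInterval

section JordanProduct

variable {K : Type*} [Field K] {n : ℕ}

theorem coe_jmul (x y : UJ K n) : (jmul x y : Matrix (Fin n) (Fin n) K) = x * y + y * x := rfl

theorem zero_jmul (y : UJ K n) : jmul 0 y = 0 :=
  Subtype.ext (by simp [coe_jmul])

def prefixJprod (g : ℕ → UJ K n) (k : ℕ) : UJ K n :=
  jprod (List.ofFn fun i : Fin (k + 1) => g i)

theorem prefixJprod_succ (g : ℕ → UJ K n) (k : ℕ) :
    prefixJprod g (k + 1) = jmul (prefixJprod g k) (g (k + 1)) := by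
  simp only [prefixJprod]
  rw [List.ofFn_succ', List.ofFn_succ, List.ofFn_succ]
  simp [jprod]

end JordanProduct

section PermutedChain

variable {K : Type*} [Field K] {n m : ℕ} {a : Fin (m + 1) → Fin n} (σ : Equiv.Perm (Fin m))

theorem prefixJprod_succ_spec {g : ℕ → UJ K n} (ha : Injective a)
    (hg : ∀ k (hk : k < m), (g k).1 = chainUnit K a (σ⁻¹ ⟨k, hk⟩) (σ⁻¹ ⟨k, hk⟩))
    {k : ℕ} (hk : k + 1 < m) {u v : Fin m} (huv : u ≤ v) (hS : sublevel σ k = Icc u v)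
    (hP : (prefixJprod g k).1 = chainUnit K a u v) :
    ((sublevel σ (k + 1)).OrdConnected → ∃ u' v', u' ≤ v' ∧ sublevel σ (k + 1) = Icc u' v' ∧
        (prefixJprod g (k + 1)).1 = chainUnit K a u' v') ∧
      (¬ (sublevel σ (k + 1)).OrdConnected → prefixJprod g (k + 1) = 0) := by
  set w := σ⁻¹ ⟨k + 1, hk⟩
  have hw : w ∉ Icc u v := by simp [← hS, mem_sublevel, w]
  have hval : (prefixJprod g (k + 1)).1 =
      (if (v : ℕ) + 1 = w then chainUnit K a u w else 0) +
        (if (w : ℕ) + 1 = u then chainUnit K a w v else 0) := by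
    rw [prefixJprod_succ, coe_jmul, hP, hg, chainUnit_mul ha, chainUnit_mul ha]
  have huv' : (u : ℕ) ≤ v := huv
  rw [sublevel_succ σ k hk, hS]
  by_cases hwu : (w : ℕ) + 1 = u
  · rw [insert_Icc_of_succ_eq_left hwu huv]
    refine ⟨fun _ => ⟨w, v, Fin.le_def.mpr (by omega), rfl, ?_⟩, fun h => (h ordConnected_Icc).elim⟩
    rw [hval, if_neg (by omega), if_pos hwu, zero_add]
  by_cases hvw : (v : ℕ) + 1 = w
  · rw [insert_Icc_of_succ_eq_right hvw huv]
    refine ⟨fun _ => ⟨u, w, Fin.le_def.mpr (by omega), rfl, ?_⟩, fun h => (h ordConnected_Icc).elim⟩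
    rw [hval, if_pos hvw, if_neg hwu, add_zero]
  refine ⟨fun h => (not_ordConnected_insert_Icc huv hw hwu hvw h).elim, fun _ => Subtype.ext ?_⟩
  rw [hval, if_neg hvw, if_neg hwu, add_zero]
  rfl

theorem prefixJprod_spec {g : ℕ → UJ K n} (ha : Injective a)
    (hg : ∀ k (hk : k < m), (g k).1 = chainUnit K a (σ⁻¹ ⟨k, hk⟩) (σ⁻¹ ⟨k, hk⟩)) :
    ∀ k < m,
      ((∀ l ≤ k, (sublevel σ l).OrdConnected) →
        ∃ u v, u ≤ v ∧ sublevel σ k = Icc u v ∧ (prefixJprod g k).1 = chainUnit K a u v) ∧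
      (¬ (∀ l ≤ k, (sublevel σ l).OrdConnected) → prefixJprod g k = 0)
  | 0, hk => by
    refine ⟨fun _ => ⟨_, _, le_rfl, (sublevel_zero σ hk).trans (Icc_self _).symm, hg 0 hk⟩,
      fun hbad => (hbad fun l hl => ?_).elim⟩
    rw [Nat.le_zero.mp hl, sublevel_zero σ hk]
    exact ordConnected_singleton
  | k + 1, hk => by
    simp only [Nat.le_succ_iff, or_imp, forall_and, forall_eq]
    obtain ⟨ih_good, ih_bad⟩ := prefixJprod_spec ha hg k (by omega)
    by_cases hgood : ∀ l ≤ k, (sublevel σ l).OrdConnected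
    · obtain ⟨u, v, huv, hS, hP⟩ := ih_good hgood
      obtain ⟨good, bad⟩ := prefixJprod_succ_spec σ ha hg hk huv hS hP
      exact ⟨fun h => good h.2, fun h => bad fun h' => h ⟨hgood, h'⟩⟩
    · refine ⟨fun h => (hgood h.1).elim, fun _ => ?_⟩
      rw [prefixJprod_succ, ih_bad hgood, zero_jmul]

theorem jprod_ofFn_perm_ne_zero_iff (hm : 0 < m) (ha : Injective a) {r : Fin m → UJ K n}
    (hr : ∀ k, (r k).1 = chainUnit K a k k) :
    jprod (List.ofFn fun k => r (σ⁻¹ k)) ≠ 0 ↔ ∀ l, (sublevel σ l).OrdConnected := by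
  obtain ⟨m, rfl⟩ : ∃ m', m = m' + 1 := ⟨m - 1, by omega⟩
  set g : ℕ → UJ K n := fun k => if h : k < m + 1 then r (σ⁻¹ ⟨k, h⟩) else 0
  have hjprod : jprod (List.ofFn fun k => r (σ⁻¹ k)) = prefixJprod g m := by
    simp only [prefixJprod, g, Fin.is_lt, dif_pos, Fin.eta]
  obtain ⟨good, bad⟩ := prefixJprod_spec σ ha (g := g)
    (fun k hk => by simp only [g, dif_pos hk]; exact hr _) m (by omega)
  have all_le_iff : (∀ l ≤ m, (sublevel σ l).OrdConnected) ↔ ∀ l, (sublevel σ l).OrdConnected :=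
    ⟨fun h l => (le_or_gt l m).elim (h l) fun hl => by
      rw [sublevel_eq_univ σ (by omega)]; exact ordConnected_univ, fun h l _ => h l⟩
  rw [hjprod, ← all_le_iff]
  refine ⟨not_imp_comm.mp bad, fun h hzero => ?_⟩
  obtain ⟨u, v, -, -, hP⟩ := good h
  exact chainUnit_ne_zero a u v (hP.symm.trans (congrArg Subtype.val hzero))

end PermutedChain

theorem statement_8_general {K : Type*} [Field K]
    {n : ℕ} (m : ℕ) (r : Fin m → UJ K n)
    (hr : ∀ k : Fin m, ∃ (i j : Fin n) (hij : i < j), r k = Eu K i j hij.le)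
    (hprod : (List.ofFn (fun k => (r k).1)).prod ≠ 0)
    (σ : Equiv.Perm (Fin m)) :
    jprod (List.ofFn (fun k => r (σ⁻¹ k))) ≠ 0 ↔ σ ∈ TT m := by
  cases m with
  | zero => exact iff_of_false (by simp [jprod]) fun ⟨t, _⟩ => t.elim0
  | succ m =>
    choose I J hIJ hrIJ using hr
    obtain ⟨a, ha, haIJ⟩ := exists_strictMono_of_prod_single_ne_zero (R := K) I J hIJ
      (by simpa [hrIJ, Eu] using hprod)
    rw [mem_TT_iff_ordConnected σ m.succ_pos]
    refine jprod_ofFn_perm_ne_zero_iff σ m.succ_pos ha.injective fun k => ?_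
    rw [hrIJ, chainUnit, ← (haIJ k).1, ← (haIJ k).2]
    rfl

/-- For strictly upper triangular matrix units `r_1, …, r_m` with nonzero associative
product, the left-normed Jordan product `r_{σ⁻¹(1)} ∘ ⋯ ∘ r_{σ⁻¹(m)}` is nonzero iff
`σ ∈ 𝒯_m`. -/
theorem statement_8 {K : Type*} [Field K] (h2 : (2 : K) ≠ 0)
    {n : ℕ} (hn : 2 ≤ n) (m : ℕ) (hm : 1 ≤ m) (r : Fin m → UJ K n)
    (hr : ∀ k : Fin m, ∃ (i j : Fin n) (hij : i < j), r k = Eu K i j hij.le)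
    (hprod : (List.ofFn (fun k => (r k).1)).prod ≠ 0)
    (σ : Equiv.Perm (Fin m)) :
    jprod (List.ofFn (fun k => r (σ⁻¹ k))) ≠ 0 ↔ σ ∈ TT m :=
  statement_8_general m r hr hprod σ
end

section
/- Let 1 ≤ i and m ≥ 1 with i + m ≤ n. Then the left-normed Jordan product Y⁺_{i:1} ∘ Y⁺_{i+1:1} ∘ ⋯ ∘ Y⁺_{i+m−1:1} equals λ·Y⁺_{i:m} where λ = 2^p for some integer p (in particular λ ≠ 0 since char K ≠ 2). -/
open Matrix

theorem Matrix.single_mul_single {l m o α : Type*} [Fintype m] [DecidableEq l] [DecidableEq m]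
    [DecidableEq o] [Semiring α] (a : l) (b c : m) (d : o) (x y : α) :
    single a b x * single c d y = if b = c then single a d (x * y) else 0 := by
  split_ifs with hbc
  · rw [hbc, single_mul_single_same]
  · exact single_mul_single_of_ne (h := hbc) ..

theorem smul_jmul {K : Type*} [Field K] {n : ℕ} (c : K) (x y : UJ K n) :
    jmul (c • x) y = c • jmul x y :=
  Subtype.ext <| by simp [jmul, smul_add]

theorem jprod_append_singleton {K : Type*} [Field K] {n : ℕ} {l : List (UJ K n)} (hl : l ≠ [])
    (y : UJ K n) : jprod (l ++ [y]) = jmul (jprod l) y := by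
  obtain ⟨x, xs, rfl⟩ := List.exists_cons_of_ne_nil hl
  simp [jprod, List.foldl_append]

/- The products `e_{i:m} e_{i+m:1} = e_{i:m+1}` and `e_{-(i+m):1} e_{-i:m} = e_{-i:m+1}` always
survive; the other cross terms vanish unless one of the two factors is its own mirror image
(`n = 2i+m+1` for `Y⁺_{i:m}`, `n = 2i+2m+2` for `Y⁺_{i+m:1}`), which doubles the result. -/
theorem jmul_Yp_Yp_one {K : Type*} [Field K] {n : ℕ} (i m : ℕ)
    (h : i + m < n) (h1 : i + m + 1 < n) (h2 : i + (m + 1) < n) :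
    jmul (Yp K i m h) (Yp K (i + m) 1 h1) =
      (if n = 2 * i + 2 * m + 2 ∨ n = 2 * i + m + 1 then (2 : K) else 1) • Yp K i (m + 1) h2 := by
  apply Subtype.ext
  simp only [jmul, Yp, Eu, Submodule.coe_add, SetLike.val_smul, add_mul, mul_add,
    single_mul_single, mul_one, Fin.mk.injEq, ← add_assoc]
  have e : n - 1 - i - (m + 1) = n - 1 - (i + m) - 1 := by omega
  by_cases hA : n = 2 * i + 2 * m + 2
  · have e1 : n - 1 - (i + m) = i + m + 1 := by omega
    simp (disch := omega) only [if_pos, if_neg, if_true, add_zero, e, e1, Nat.add_sub_cancel]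
    rw [two_smul]
    abel
  by_cases hB : n = 2 * i + m + 1
  · have e1 : n - 1 - (i + m) = i := by omega
    have e2 : n - 1 - i = i + m := by omega
    have e3 : i + m - (m + 1) = i - 1 := by omega
    simp (disch := omega) only [if_pos, if_neg, if_true, add_zero, e1, e2, e3, Nat.add_sub_cancel]
    rw [two_smul]
    abel
  · simp (disch := omega) only [if_pos, if_neg, if_true, add_zero, e, one_smul]

theorem exists_jprod_ofFn_Yp_one_eq_two_pow_smul {K : Type*} [Field K] {n : ℕ} (i : ℕ) {m : ℕ}
    (hm : 1 ≤ m) (h : i + m < n) :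
    ∃ p : ℕ, jprod (List.ofFn fun k : Fin m => Yp K (i + k.1) 1 (by omega)) =
      (2 : K) ^ p • Yp K i m h := by
  induction m, hm using Nat.le_induction with
  | base => exact ⟨0, by simp [jprod]⟩
  | succ m hm ih =>
    obtain ⟨p, hp⟩ := ih (by omega)
    rw [List.ofFn_succ', List.concat_eq_append,
      jprod_append_singleton (by rw [Ne, List.ofFn_eq_nil_iff]; omega)]
    simp only [Fin.val_castSucc, Fin.val_last]
    rw [hp, smul_jmul, jmul_Yp_Yp_one i m (by omega) (by omega) h, smul_smul]
    split_ifs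
    · exact ⟨p + 1, by rw [pow_succ]⟩
    · exact ⟨p, by rw [mul_one]⟩

/-- `Y⁺_{i:1} ∘ Y⁺_{i+1:1} ∘ ⋯ ∘ Y⁺_{i+m−1:1} = λ · Y⁺_{i:m}` with `λ = 2^p ≠ 0`. -/
theorem statement_11 {K : Type*} [Field K] (h2 : (2 : K) ≠ 0)
    {n : ℕ} (i m : ℕ) (hm : 1 ≤ m) (h : i + m < n) :
    ∃ p : ℤ, (2 : K) ^ p ≠ 0 ∧
      jprod (List.ofFn (fun k : Fin m => Yp K (i + k.1) 1 (by have := k.isLt; omega))) =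
        (2 : K) ^ p • Yp K i m h := by
  obtain ⟨p, hp⟩ := exists_jprod_ofFn_Yp_one_eq_two_pow_smul (K := K) i hm h
  exact ⟨p, zpow_ne_zero _ h2, by rwa [zpow_natCast]⟩
end
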